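/- Let G_N : ℤ → ℝ be defined by G_N = a·1_{−ℕ} + N·1_{{0}} + b·1_{ℕ} for a, b ≥ 0 and N ∈ ℕ with N ≥ max{a,b}. Then for the uncentered discrete maximal operator, Var(M̃G_N) = Var(G_N) − |b − a|. -/

import Mathlib

/-- Total variation over ℤ. -/
noncomputable def varZ (G : ℤ → ℝ) : ENNReal :=
  ∑' n : ℤ, ENNReal.ofReal |G (n + 1) - G n|

/-- The uncentered discrete maximal operator. -/
noncomputable def uHL (G : ℤ → ℝ) (n : ℤ) : ℝ :=
  ⨆ p : ℕ × ℕ, (1 / ((p.1 : ℝ) + (p.2 : ℝ) + 1)) *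
    ∑ y ∈ Finset.Icc (n - (p.1 : ℤ)) (n + (p.2 : ℤ)), |G y|


/-!
For `n ≥ 0` an averaging window around `n` is best either when it reaches far to the left,
where the averages tend to `a`, or when it is exactly `[0, n]`, so
`M̃G(n) = max a ((N + b n) / (n + 1))`, and symmetrically for `n < 0`.
Hence both `G` and `M̃G` increase up to the peak `N` at `0` and decrease afterwards, so the
variation of each telescopes to `2N` minus its two limits at `±∞`: these are `a, b` for `G`
and `max a b` on both sides for `M̃G`, and `2 max a b - a - b = |b - a|`.
-/

open Filter Finset Topology

lemma tsum_ofReal_abs_sub_of_antitone {u : ℕ → ℝ} {L : ℝ} (hu : Antitone u)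
    (hL : Tendsto u atTop (𝓝 L)) :
    ∑' k, ENNReal.ofReal |u (k + 1) - u k| = ENNReal.ofReal (u 0 - L) := by
  have hnonneg : ∀ k, 0 ≤ u k - u (k + 1) := fun k => sub_nonneg.2 (hu k.le_succ)
  have hsum : HasSum (fun k => u k - u (k + 1)) (u 0 - L) := by
    rw [hasSum_iff_tendsto_nat_of_nonneg hnonneg]
    simpa only [Finset.sum_range_sub'] using hL.const_sub (u 0)
  simp_rw [abs_sub_comm, abs_of_nonneg (hnonneg _)]
  rw [← ENNReal.ofReal_tsum_of_nonneg hnonneg hsum.summable, hsum.tsum_eq]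

lemma varZ_eq_of_antitone {f : ℤ → ℝ} {L₁ L₂ : ℝ}
    (h₁ : Antitone fun k : ℕ => f k) (t₁ : Tendsto (fun k : ℕ => f k) atTop (𝓝 L₁))
    (h₂ : Antitone fun k : ℕ => f (-k)) (t₂ : Tendsto (fun k : ℕ => f (-k)) atTop (𝓝 L₂)) :
    varZ f = ENNReal.ofReal (f 0 - L₁) + ENNReal.ofReal (f 0 - L₂) := by
  rw [varZ, tsum_of_nat_of_neg_add_one ENNReal.summable ENNReal.summable]
  have hneg : ∀ k : ℕ, |f (-((k : ℤ) + 1) + 1) - f (-((k : ℤ) + 1))| =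
      |f (-((k + 1 : ℕ) : ℤ)) - f (-(k : ℤ))| := fun k => by
    rw [abs_sub_comm]; push_cast; ring_nf
  simp_rw [hneg, ← Nat.cast_succ]
  rw [tsum_ofReal_abs_sub_of_antitone h₁ t₁, tsum_ofReal_abs_sub_of_antitone h₂ t₂]
  simp

lemma antitone_max_avg {a b c : ℝ} (hbc : b ≤ c) :
    Antitone fun k : ℕ => max a ((c + b * k) / (k + 1)) := by
  refine antitone_const.max (antitone_nat_of_succ_le fun k => ?_)
  rw [div_le_div_iff₀ (by positivity) (by positivity)]
  push_cast
  nlinarith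

lemma tendsto_max_avg (a b c : ℝ) :
    Tendsto (fun k : ℕ => max a ((c + b * k) / (k + 1))) atTop (𝓝 (max a b)) := by
  have hrw : (fun k : ℕ => (c + b * k) / (k + 1)) = fun k : ℕ => b + (c - b) * (1 / (k + 1)) := by
    funext k
    field_simp
    ring
  refine tendsto_const_nhds.max ?_
  rw [hrw]
  simpa using tendsto_const_nhds.add (tendsto_one_div_add_atTop_nhds_zero_nat.const_mul (c - b))

lemma uHL_comp_neg (G : ℤ → ℝ) (n : ℤ) : uHL (fun m => G (-m)) n = uHL G (-n) := by
  unfold uHL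
  rw [← (Equiv.prodComm ℕ ℕ).surjective.iSup_comp]
  refine iSup_congr fun p => ?_
  have hsum : ∑ y ∈ Icc (n - p.2) (n + p.1), |G (-y)| = ∑ y ∈ Icc (-n - p.1) (-n + p.2), |G y| :=
    sum_nbij' (fun y => -y) (fun y => -y) (by intro y; simp; omega) (by intro y; simp; omega)
      (by simp) (by simp) (by simp)
  simp only [Equiv.prodComm_apply, Prod.fst_swap, Prod.snd_swap, hsum]
  ring_nf

def step (a c b : ℝ) (n : ℤ) : ℝ := if n < 0 then a else if n = 0 then c else b

section step

variable {a b c : ℝ}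

lemma step_neg (n : ℤ) : step a c b (-n) = step b c a n := by
  unfold step
  split_ifs <;> first | rfl | omega

lemma abs_step (ha : 0 ≤ a) (hb : 0 ≤ b) (hc : 0 ≤ c) (n : ℤ) :
    |step a c b n| = step a c b n := by
  unfold step
  split_ifs <;> simpa

lemma step_zero : step a c b 0 = c := rfl

lemma step_of_pos {n : ℤ} (hn : 0 < n) : step a c b n = b := by
  simp [step, hn.not_gt, hn.ne']

lemma step_of_neg {n : ℤ} (hn : n < 0) : step a c b n = a := if_pos hn

lemma sum_step_Icc (i j : ℕ) : ∑ y ∈ Icc (-(i : ℤ)) j, step a c b y = a * i + c + b * j := by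
  have hsplit : Icc (-(i : ℤ)) j = Ico (-(i : ℤ)) 0 ∪ Icc 0 j := by ext; simp; omega
  have hneg : ∑ y ∈ Ico (-(i : ℤ)) 0, step a c b y = a * i := by
    rw [sum_congr rfl fun y hy => step_of_neg (mem_Ico.1 hy).2]
    simp [mul_comm]
  have hpos : ∑ y ∈ Ioc 0 (j : ℤ), step a c b y = b * j := by
    rw [sum_congr rfl fun y hy => step_of_pos (mem_Ioc.1 hy).1]
    simp [mul_comm]
  rw [hsplit, sum_union (disjoint_left.2 (by intro; simp; omega)),
    Icc_eq_cons_Ioc (by positivity), sum_cons, hneg, hpos, step_zero]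
  ring

lemma avg_step_le (ha : 0 ≤ a) (hb : 0 ≤ b) (hbc : b ≤ c) (k p q : ℕ) :
    1 / ((p : ℝ) + q + 1) * ∑ y ∈ Icc ((k : ℤ) - p) (k + q), |step a c b y| ≤
      max a ((c + b * k) / (k + 1)) := by
  set M := max a ((c + b * k) / (k + 1))
  have haM : a ≤ M := le_max_left _ _
  have hcM : c + b * k ≤ M * (k + 1) := (div_le_iff₀ (by positivity)).1 (le_max_right _ _)
  have hbM : b ≤ M := by nlinarith
  simp only [abs_step ha hb (hb.trans hbc)]
  rw [one_div_mul_eq_div, div_le_iff₀ (by positivity)]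
  rcases lt_or_ge p k with hpk | hkp
  · calc ∑ y ∈ Icc ((k : ℤ) - p) (k + q), step a c b y
          ≤ ∑ _y ∈ Icc ((k : ℤ) - p) (k + q), M :=
            sum_le_sum fun y hy => (step_of_pos (by simp only [mem_Icc] at hy; omega)).trans_le hbM
      _ = M * (p + q + 1) := by
            rw [sum_const, Int.card_Icc, nsmul_eq_mul, mul_comm]
            congr 1
            rw [show (k : ℤ) + q + 1 - (k - p) = ((p + q + 1 : ℕ) : ℤ) by push_cast; ring,
              Int.toNat_natCast]
            push_cast
            ring
  · obtain ⟨i, rfl⟩ := Nat.exists_eq_add_of_le hkp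
    rw [show ((k : ℤ) - (k + i : ℕ)) = -(i : ℤ) by push_cast; ring, ← Nat.cast_add,
      sum_step_Icc]
    push_cast
    nlinarith

lemma uHL_step_natCast (ha : 0 ≤ a) (hb : 0 ≤ b) (hbc : b ≤ c) (k : ℕ) :
    uHL (step a c b) k = max a ((c + b * k) / (k + 1)) := by
  have hbdd : BddAbove (Set.range fun p : ℕ × ℕ => 1 / ((p.1 : ℝ) + p.2 + 1) *
      ∑ y ∈ Icc ((k : ℤ) - p.1) (k + p.2), |step a c b y|) :=
    ⟨_, Set.forall_mem_range.2 fun p => avg_step_le ha hb hbc k p.1 p.2⟩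
  -- the windows `[-i, k]`, whose averages run from the one over `[0, k]` down to `a`
  have hf : ∀ i : ℕ, (a * i + (c + b * k)) / (i + (k + 1)) ≤ uHL (step a c b) k := fun i => by
    refine le_trans (le_of_eq ?_) (le_ciSup hbdd (k + i, 0))
    simp only [abs_step ha hb (hb.trans hbc), Nat.cast_add, Nat.cast_zero, add_zero]
    rw [show (k : ℤ) - (k + i : ℤ) = -(i : ℤ) by ring, sum_step_Icc]
    field_simp
    ring
  have hfa : Tendsto (fun i : ℕ => (a * i + (c + b * k)) / (i + (k + 1))) atTop (𝓝 a) := by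
    have hrw : (fun i : ℕ => (a * i + (c + b * k)) / (i + (k + 1))) =
        fun i : ℕ => a + (c + b * k - a * (k + 1)) / (i + (k + 1)) := by
      funext i
      field_simp
      ring
    rw [hrw]
    simpa using (tendsto_const_nhds (x := a)).add
      ((tendsto_const_nhds (x := c + b * k - a * (k + 1))).div_atTop
        (tendsto_atTop_add_const_right _ ((k : ℝ) + 1) tendsto_natCast_atTop_atTop))
  refine le_antisymm (ciSup_le fun p => avg_step_le ha hb hbc k p.1 p.2)
    (max_le (le_of_tendsto' hfa hf) ?_)
  simpa using hf 0

lemma uHL_step_neg_natCast (ha : 0 ≤ a) (hb : 0 ≤ b) (hac : a ≤ c) (k : ℕ) :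
    uHL (step a c b) (-k) = max b ((c + a * k) / (k + 1)) := by
  rw [← uHL_comp_neg]
  simp only [step_neg]
  exact uHL_step_natCast hb ha hac k

lemma varZ_step (hac : a ≤ c) (hbc : b ≤ c) :
    varZ (step a c b) = ENNReal.ofReal (c - b) + ENNReal.ofReal (c - a) := by
  have h₁ {a b : ℝ} (hbc : b ≤ c) : Antitone fun k : ℕ => step a c b k :=
    antitone_nat_of_succ_le fun k => by
      rw [step_of_pos (by positivity)]
      rcases k.eq_zero_or_pos with rfl | hk
      · exact hbc
      · rw [step_of_pos (by positivity)]
  have t₁ (a b : ℝ) : Tendsto (fun k : ℕ => step a c b k) atTop (𝓝 b) :=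
    tendsto_const_nhds.congr' ((eventually_gt_atTop 0).mono fun k hk =>
      (step_of_pos (by positivity)).symm)
  have := varZ_eq_of_antitone (h₁ hbc) (t₁ a b)
    (by simpa only [step_neg] using h₁ hac) (by simpa only [step_neg] using t₁ b a)
  rwa [step_zero] at this

lemma varZ_uHL_step (ha : 0 ≤ a) (hb : 0 ≤ b) (hac : a ≤ c) (hbc : b ≤ c) :
    varZ (uHL (step a c b)) =
      ENNReal.ofReal (c - max a b) + ENNReal.ofReal (c - max b a) := by
  have h0 : uHL (step a c b) 0 = c := by
    simpa [max_eq_right hac] using uHL_step_natCast ha hb hbc 0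
  rw [varZ_eq_of_antitone (f := uHL (step a c b))
    (by simpa only [uHL_step_natCast ha hb hbc] using antitone_max_avg hbc)
    (by simpa only [uHL_step_natCast ha hb hbc] using tendsto_max_avg a b c)
    (by simpa only [uHL_step_neg_natCast ha hb hac] using antitone_max_avg hac)
    (by simpa only [uHL_step_neg_natCast ha hb hac] using tendsto_max_avg b a c), h0]

end step

theorem stmt17 (a b : ℝ) (ha : 0 ≤ a) (hb : 0 ≤ b) (N : ℕ)
    (hN : max a b ≤ N) (G : ℤ → ℝ)
    (hG : ∀ n : ℤ, G n = if n < 0 then a else if n = 0 then (N : ℝ) else b) :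
    varZ (uHL G) = varZ G - ENNReal.ofReal |b - a| := by
  obtain rfl : G = step a N b := funext hG
  have haN : a ≤ N := (le_max_left a b).trans hN
  have hbN : b ≤ N := (le_max_right a b).trans hN
  rw [varZ_uHL_step ha hb haN hbN, varZ_step haN hbN,
    ← ENNReal.ofReal_add (by simpa using hN) (by simpa [max_comm] using hN),
    ← ENNReal.ofReal_add (by linarith) (by linarith), ← ENNReal.ofReal_sub _ (abs_nonneg _)]
  congr 1
  rcases le_total a b with h | h
  · rw [max_eq_right h, max_eq_left h, abs_of_nonneg (by linarith)]; ring
  · rw [max_eq_left h, max_eq_right h, abs_of_nonpos (by linarith)]; ring
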